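/- arXiv:1701.01215 — 4 statements merged into one kernel-verified Lean document; each statement's English description precedes it below -/
import Mathlib

section
/- Let α ∈ ℝ \ {0}, m > 0, and r > 0. Then there is a constant C = C(m), independent of r and α, such that |∫₀^∞ e^{iαt} e^{-r²/t} t^{-m} dt| ≤ C / (|α| r^{2m}). -/
/-!
Put `f(t) = e^{-r²/t} t^{-m}`. It extends continuously by `0` to `t = 0` and is bounded by
`e^{-m} m^m / r^{2m}` (the maximum of `x^m e^{-x}` is at `x = m`). Integrating by parts against the
primitive `e^{iαt} / (iα)` bounds each truncated integral `∫₀^T` by `(f(T) + ∫₀^T |f'|) / |α|`, and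
`|f'| ≤ r² e^{-r²/t} t^{-m-2} + m e^{-r²/t} t^{-m-1}`, whose integral over `(0, ∞)` is a constant
times `r^{-2m}` by scaling. The bound, uniform in `T`, passes to the limit.
-/

open MeasureTheory Set Filter Topology Real

theorem exp_neg_mul_rpow_le {s x : ℝ} (hs : 0 < s) (hx : 0 < x) :
    exp (-x) * x ^ s ≤ exp (-s) * s ^ s := by
  rw [← log_le_log_iff (by positivity) (by positivity), log_mul (exp_ne_zero _) (by positivity),
    log_mul (exp_ne_zero _) (by positivity), log_exp, log_exp, log_rpow hx, log_rpow hs]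
  have h := log_le_sub_one_of_pos (div_pos hx hs)
  rw [log_div hx.ne' hs.ne'] at h
  have h' := mul_le_mul_of_nonneg_left h hs.le
  rw [mul_sub, mul_sub, mul_div_cancel₀ _ hs.ne', mul_one] at h'
  linarith

theorem norm_integral_exp_I_mul_le {u u' : ℝ → ℝ} {a b α : ℝ} (hab : a ≤ b) (hα : α ≠ 0)
    (hu : ContinuousOn u (Icc a b)) (hderiv : ∀ t ∈ Ioo a b, HasDerivAt u (u' t) t)
    (hu' : IntervalIntegrable u' volume a b) :
    ‖∫ t in a..b, Complex.exp (Complex.I * ((α * t : ℝ) : ℂ)) * (u t : ℂ)‖ ≤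
      (|u a| + |u b| + ∫ t in a..b, |u' t|) / |α| := by
  set e : ℝ → ℂ := fun t => Complex.exp (Complex.I * ((α * t : ℝ) : ℂ))
  set v : ℝ → ℂ := fun t => e t / (Complex.I * α)
  have hprim : ∀ t, HasDerivAt v (e t) t := by
    intro t
    have h : HasDerivAt (fun t : ℝ => Complex.I * ((α * t : ℝ) : ℂ)) (Complex.I * α) t := by
      simpa using ((hasDerivAt_id t).const_mul α).ofReal_comp.const_mul Complex.I
    refine (h.cexp.div_const (Complex.I * α)).congr_deriv ?_
    simp [e, hα]
  have hv : ∀ t, ‖v t‖ = 1 / |α| := by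
    intro t
    simp [v, e, Complex.norm_exp]
  have hibp := intervalIntegral.integral_mul_deriv_eq_deriv_mul_of_hasDerivAt
    (u := fun t => (u t : ℂ)) (u' := fun t => (u' t : ℂ))
    (Complex.continuous_ofReal.comp_continuousOn (uIcc_of_le hab ▸ hu))
    (fun t _ => (hprim t).continuousAt.continuousWithinAt)
    (fun t ht => (hderiv t (by simpa [hab] using ht)).ofReal_comp)
    (fun t _ => hprim t) ⟨hu'.1.ofReal, hu'.2.ofReal⟩
    ((by fun_prop : Continuous e).intervalIntegrable a b)
  have hrest : ‖∫ t in a..b, (u' t : ℂ) * v t‖ ≤ (∫ t in a..b, |u' t|) / |α| :=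
    calc ‖∫ t in a..b, (u' t : ℂ) * v t‖ ≤ ∫ t in a..b, ‖(u' t : ℂ) * v t‖ :=
          intervalIntegral.norm_integral_le_integral_norm hab
      _ = (∫ t in a..b, |u' t|) / |α| := by
          simp only [norm_mul, hv, Complex.norm_real, norm_eq_abs,
            intervalIntegral.integral_mul_const]
          ring
  have hswap : (∫ t in a..b, e t * (u t : ℂ)) = ∫ t in a..b, (u t : ℂ) * e t := by
    simp only [mul_comm]
  have hend : ∀ t, ‖(u t : ℂ) * v t‖ = |u t| / |α| := by
    intro t
    rw [norm_mul, hv, Complex.norm_real, norm_eq_abs, mul_one_div]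
  calc ‖∫ t in a..b, e t * (u t : ℂ)‖
      ≤ ‖(u b : ℂ) * v b‖ + ‖(u a : ℂ) * v a‖ + ‖∫ t in a..b, (u' t : ℂ) * v t‖ := by
        rw [hswap, hibp]
        exact (norm_sub_le _ _).trans (by gcongr; exact norm_sub_le _ _)
    _ ≤ (|u a| + |u b| + ∫ t in a..b, |u' t|) / |α| := by
        rw [hend, hend, add_div, add_div]
        linarith

/-- At `t = 0` the conventions `x / 0 = 0` and `0 ^ s = 0` (for `s ≠ 0`) give the value `0`,
which is the continuous extension. -/
noncomputable def expNegDivRpow (c s t : ℝ) : ℝ := exp (-(c / t)) / t ^ s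

section

variable {c s t : ℝ}

theorem expNegDivRpow_nonneg (ht : 0 ≤ t) : 0 ≤ expNegDivRpow c s t := by
  unfold expNegDivRpow; positivity

theorem expNegDivRpow_le (hc : 0 < c) (hs : 0 < s) (ht : 0 < t) :
    expNegDivRpow c s t ≤ exp (-s) * s ^ s / c ^ s := by
  have hx : 0 < c / t := by positivity
  have h : t ^ s = c ^ s / (c / t) ^ s := by
    rw [div_rpow hc.le ht.le]; field_simp
  rw [expNegDivRpow, h, div_div_eq_mul_div]
  exact div_le_div_of_nonneg_right (exp_neg_mul_rpow_le hs hx) (by positivity)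

theorem expNegDivRpow_eq_mul_add_one (ht : 0 < t) :
    expNegDivRpow c s t = t * expNegDivRpow c (s + 1) t := by
  rw [expNegDivRpow, expNegDivRpow, rpow_add_one ht.ne']
  field_simp

theorem tendsto_expNegDivRpow_nhdsGT_zero (hc : 0 < c) (hs : -1 < s) :
    Tendsto (expNegDivRpow c s) (𝓝[>] 0) (𝓝 0) := by
  set B := exp (-(s + 1)) * (s + 1) ^ (s + 1) / c ^ (s + 1)
  have hlim : Tendsto (fun t => t * B) (𝓝[>] 0) (𝓝 0) :=
    ((continuous_mul_const B).tendsto' 0 0 (zero_mul B)).mono_left nhdsWithin_le_nhds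
  refine tendsto_of_tendsto_of_tendsto_of_le_of_le' tendsto_const_nhds hlim ?_ ?_
  · filter_upwards [self_mem_nhdsWithin] with t ht using expNegDivRpow_nonneg (le_of_lt ht)
  · filter_upwards [self_mem_nhdsWithin] with t (ht : 0 < t)
    rw [expNegDivRpow_eq_mul_add_one ht]
    exact mul_le_mul_of_nonneg_left (expNegDivRpow_le hc (by linarith) ht) ht.le

theorem hasDerivAt_expNegDivRpow (ht : 0 < t) :
    HasDerivAt (expNegDivRpow c s)
      (c * expNegDivRpow c (s + 2) t - s * expNegDivRpow c (s + 1) t) t := by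
  have h1 : HasDerivAt (fun t => -(c / t)) (c / t ^ 2) t := by
    simpa [div_eq_mul_inv] using ((hasDerivAt_inv ht.ne').const_mul c).fun_neg
  have h2 := h1.exp.div (hasDerivAt_rpow_const (p := s) (Or.inl ht.ne')) (by positivity)
  refine h2.congr_deriv ?_
  simp only [expNegDivRpow, rpow_add ht, rpow_sub_one ht.ne', rpow_two, rpow_one]
  field_simp

theorem expNegDivRpow_zero (hs : s ≠ 0) : expNegDivRpow c s 0 = 0 := by
  simp [expNegDivRpow, zero_rpow hs]

theorem continuousOn_expNegDivRpow (hc : 0 < c) (hs : 0 < s) :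
    ContinuousOn (expNegDivRpow c s) (Ici 0) := by
  intro t (ht : 0 ≤ t)
  rcases ht.eq_or_lt with rfl | ht
  · rw [← continuousWithinAt_Ioi_iff_Ici, ContinuousWithinAt, expNegDivRpow_zero hs.ne']
    exact tendsto_expNegDivRpow_nhdsGT_zero hc (by linarith)
  · exact (hasDerivAt_expNegDivRpow ht).continuousAt.continuousWithinAt

theorem integrableOn_expNegDivRpow_Ioi (hc : 0 < c) (hs : 1 < s) :
    IntegrableOn (expNegDivRpow c s) (Ioi 0) := by
  have hcont := continuousOn_expNegDivRpow hc (zero_lt_one.trans hs)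
  rw [← Ioc_union_Ioi_eq_Ioi zero_le_one, integrableOn_union]
  refine ⟨(hcont.mono Icc_subset_Ici_self).integrableOn_Icc.mono_set Ioc_subset_Icc_self, ?_⟩
  have hmeas : AEStronglyMeasurable (expNegDivRpow c s) (volume.restrict (Ioi 1)) :=
    (hcont.mono (Ioi_subset_Ici zero_le_one)).aestronglyMeasurable measurableSet_Ioi
  have hint : IntegrableOn (fun t : ℝ => t ^ (-s)) (Ioi 1) :=
    integrableOn_Ioi_rpow_of_lt (neg_lt_neg hs) zero_lt_one
  refine hint.mono' hmeas ?_
  filter_upwards [self_mem_ae_restrict measurableSet_Ioi] with t (ht : 1 < t)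
  have ht0 : 0 < t := zero_lt_one.trans ht
  rw [norm_of_nonneg (expNegDivRpow_nonneg ht0.le), expNegDivRpow, rpow_neg ht0.le, ← one_div]
  have hexp : exp (-(c / t)) ≤ 1 := exp_le_one_iff.2 (neg_nonpos.2 (by positivity))
  exact div_le_div_of_nonneg_right hexp (by positivity)

theorem integral_expNegDivRpow_Ioi (hc : 0 < c) :
    ∫ t in Ioi 0, expNegDivRpow c s t = c ^ (1 - s) * ∫ t in Ioi 0, expNegDivRpow 1 s t := by
  have hscale :
      ∀ t ∈ Ioi (0 : ℝ), expNegDivRpow c s (c * t) = c ^ (-s) * expNegDivRpow 1 s t := by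
    intro t (ht : 0 < t)
    rw [expNegDivRpow, expNegDivRpow, mul_rpow hc.le ht.le, rpow_neg hc.le,
      show c / (c * t) = 1 / t by field_simp]
    field_simp
  have h := integral_comp_mul_left_Ioi (expNegDivRpow c s) 0 hc
  rw [mul_zero, setIntegral_congr_fun measurableSet_Ioi hscale, integral_const_mul, smul_eq_mul,
    eq_inv_mul_iff_mul_eq₀ hc.ne'] at h
  rw [← h, ← mul_assoc, rpow_sub hc, rpow_one, rpow_neg hc.le, div_eq_mul_inv]

/-- By the substitution `t ↦ c t`, `variationConst s / c ^ s` is the integral over `(0, ∞)` of the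
majorant of `|∂ₜ expNegDivRpow c s|` (in fact `variationConst s = 2 Γ(s + 1)`). -/
noncomputable def variationConst (s : ℝ) : ℝ :=
  (∫ t in Ioi 0, expNegDivRpow 1 (s + 2) t) + s * ∫ t in Ioi 0, expNegDivRpow 1 (s + 1) t

theorem variationConst_nonneg (hs : 0 ≤ s) : 0 ≤ variationConst s := by
  have hint : ∀ p, 0 ≤ ∫ t in Ioi (0 : ℝ), expNegDivRpow 1 p t := fun p =>
    setIntegral_nonneg measurableSet_Ioi fun t ht => expNegDivRpow_nonneg (le_of_lt ht)
  unfold variationConst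
  have := hint (s + 2); have := hint (s + 1)
  positivity

theorem integrableOn_expNegDivRpow_derivMajorant (hc : 0 < c) (hs : 0 < s) :
    IntegrableOn (fun t => c * expNegDivRpow c (s + 2) t + s * expNegDivRpow c (s + 1) t)
      (Ioi 0) :=
  ((integrableOn_expNegDivRpow_Ioi hc (by linarith)).const_mul c).add
    ((integrableOn_expNegDivRpow_Ioi hc (by linarith)).const_mul s)

theorem integral_expNegDivRpow_derivMajorant (hc : 0 < c) (hs : 0 < s) :
    ∫ t in Ioi 0, (c * expNegDivRpow c (s + 2) t + s * expNegDivRpow c (s + 1) t) =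
      variationConst s / c ^ s := by
  rw [integral_add ((integrableOn_expNegDivRpow_Ioi hc (by linarith)).const_mul c)
      ((integrableOn_expNegDivRpow_Ioi hc (by linarith)).const_mul s),
    integral_const_mul, integral_const_mul, integral_expNegDivRpow_Ioi hc,
    integral_expNegDivRpow_Ioi hc, variationConst, ← mul_assoc,
    ← rpow_one_add' hc.le (by linarith),
    show 1 + (1 - (s + 2)) = -s by ring, show 1 - (s + 1) = -s by ring, rpow_neg hc.le]
  ring

theorem abs_deriv_expNegDivRpow_le (hc : 0 ≤ c) (hs : 0 ≤ s) (ht : 0 ≤ t) :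
    |c * expNegDivRpow c (s + 2) t - s * expNegDivRpow c (s + 1) t| ≤
      c * expNegDivRpow c (s + 2) t + s * expNegDivRpow c (s + 1) t := by
  have h₁ := expNegDivRpow_nonneg (c := c) (s := s + 2) ht
  have h₂ := expNegDivRpow_nonneg (c := c) (s := s + 1) ht
  rw [abs_sub_le_iff]
  constructor <;> nlinarith

theorem norm_integral_exp_I_mul_expNegDivRpow_le (hc : 0 < c) (hs : 0 < s) {α : ℝ} (hα : α ≠ 0)
    (T : ℝ) :
    ‖∫ t in Ioc 0 T, Complex.exp (Complex.I * ((α * t : ℝ) : ℂ)) * (expNegDivRpow c s t : ℂ)‖ ≤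
      (exp (-s) * s ^ s + variationConst s) / (|α| * c ^ s) := by
  rcases le_or_gt T 0 with hT | hT
  · rw [Ioc_eq_empty hT.not_gt, Measure.restrict_empty, integral_zero_measure, norm_zero]
    have := variationConst_nonneg hs.le
    positivity
  set f' := fun t => c * expNegDivRpow c (s + 2) t - s * expNegDivRpow c (s + 1) t
  set g := fun t => c * expNegDivRpow c (s + 2) t + s * expNegDivRpow c (s + 1) t
  have hg : IntegrableOn g (Ioc 0 T) :=
    (integrableOn_expNegDivRpow_derivMajorant hc hs).mono_set Ioc_subset_Ioi_self
  have hdom : ∀ t ∈ Ioc 0 T, |f' t| ≤ g t := fun t ht =>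
    abs_deriv_expNegDivRpow_le hc.le hs.le ht.1.le
  have hf' : IntervalIntegrable f' volume 0 T := by
    have hcont : ContinuousOn f' (Ioc 0 T) :=
      ((((continuousOn_expNegDivRpow hc (by linarith)).const_smul c).sub
        ((continuousOn_expNegDivRpow hc (by linarith)).const_smul s)).mono
        fun t ht => le_of_lt ht.1)
    refine (intervalIntegrable_iff_integrableOn_Ioc_of_le hT.le).2
      (hg.mono' (hcont.aestronglyMeasurable measurableSet_Ioc) ?_)
    filter_upwards [self_mem_ae_restrict measurableSet_Ioc] with t ht using hdom t ht
  have hvar : ∫ t in 0..T, |f' t| ≤ variationConst s / c ^ s :=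
    calc ∫ t in 0..T, |f' t| ≤ ∫ t in 0..T, g t :=
          intervalIntegral.integral_mono_on_of_le_Ioo hT.le hf'.abs
            ((intervalIntegrable_iff_integrableOn_Ioc_of_le hT.le).2 hg)
            fun t ht => hdom t (Ioo_subset_Ioc_self ht)
      _ ≤ ∫ t in Ioi 0, g t := by
          rw [intervalIntegral.integral_of_le hT.le]
          refine setIntegral_mono_set (integrableOn_expNegDivRpow_derivMajorant hc hs) ?_
            Ioc_subset_Ioi_self.eventuallyLE
          filter_upwards [self_mem_ae_restrict measurableSet_Ioi] with t (ht : 0 < t)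
          exact (abs_nonneg _).trans (abs_deriv_expNegDivRpow_le hc.le hs.le ht.le)
      _ = variationConst s / c ^ s := integral_expNegDivRpow_derivMajorant hc hs
  rw [← intervalIntegral.integral_of_le hT.le]
  refine (norm_integral_exp_I_mul_le hT.le hα
    ((continuousOn_expNegDivRpow hc hs).mono Icc_subset_Ici_self)
    (fun t ht => hasDerivAt_expNegDivRpow ht.1) hf').trans ?_
  rw [expNegDivRpow_zero hs.ne', abs_zero, zero_add, abs_of_nonneg (expNegDivRpow_nonneg hT.le)]
  calc (expNegDivRpow c s T + ∫ t in 0..T, |f' t|) / |α|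
      ≤ (exp (-s) * s ^ s / c ^ s + variationConst s / c ^ s) / |α| := by
        gcongr
        exact expNegDivRpow_le hc hs hT
    _ = (exp (-s) * s ^ s + variationConst s) / (|α| * c ^ s) := by
        rw [← add_div, div_div, mul_comm (c ^ s)]

end

theorem stmt_2 (m : ℝ) (hm : 0 < m) :
    ∃ C > 0, ∀ (α r : ℝ), α ≠ 0 → 0 < r → ∀ I : ℂ,
      Tendsto (fun T : ℝ =>
          ∫ t in Ioc (0 : ℝ) T,
            Complex.exp (Complex.I * ((α * t : ℝ) : ℂ)) *
              ((Real.exp (-(r ^ 2 / t)) / t ^ m : ℝ) : ℂ))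
        atTop (nhds I) →
      ‖I‖ ≤ C / (|α| * r ^ (2 * m)) := by
  have hV := variationConst_nonneg hm.le
  refine ⟨exp (-m) * m ^ m + variationConst m, by positivity, fun α r hα hr I hI => ?_⟩
  have hr2m : (r ^ 2) ^ m = r ^ (2 * m) := by
    rw [← rpow_natCast, ← rpow_mul hr.le, Nat.cast_ofNat]
  refine le_of_tendsto' hI.norm fun T => ?_
  have h := norm_integral_exp_I_mul_expNegDivRpow_le (pow_pos hr 2) hm hα T
  rw [hr2m] at h
  exact h
end

section
/- Let α ∈ ℝ \ {0}, m > 0, and r > 0. Then there is a constant C = C(m), independent of r and α, such that |∫₀^∞ e^{iαt} e^{-r²/t} t^{-m} dt| ≤ C / (|α|^{1/(m+1)} r^{2m²/(m+1)}). -/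
/-!
Write the integrand as `e^{iαt} φ(t)` with `φ(t) = e^{-r²/t} t^{-m}`. Since `u^m e^{-u} ≤ (m/e)^m`,
`φ ≤ (m/e)^m r^{-2m}` everywhere, so the integral over `(0, l]` is at most `(m/e)^m r^{-2m} l`.
On `[l, T]` one integration by parts against `e^{iαt}/(iα)` bounds the integral by
`(φ(l) + φ(T) + ∫ |φ'|) / |α|`, and `φ(t) ≤ t^{-m}`, `|φ'(t)| ≤ (1 + m) t^{-m-1}` make this
`O(l^{-m} / |α|)` uniformly in `T`. The choice `l = r^{2m/(m+1)} |α|^{-1/(m+1)}` equalises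
the two bounds.
-/

open MeasureTheory Set Filter

open Real in
theorem rpow_mul_exp_neg_le {m u : ℝ} (hm : 0 < m) (hu : 0 ≤ u) :
    u ^ m * exp (-u) ≤ (m / exp 1) ^ m := by
  -- `x ≤ exp (x - 1)` at `x = u / m`, raised to the power `m`
  have key : u * exp (-(u / m)) ≤ m / exp 1 := by
    have h := add_one_le_exp (u / m - 1)
    rw [sub_add_cancel, exp_sub, div_le_div_iff₀ hm (exp_pos 1)] at h
    rw [exp_neg, ← div_eq_mul_inv, div_le_div_iff₀ (exp_pos _) (exp_pos 1)]
    linarith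
  calc u ^ m * exp (-u) = (u * exp (-(u / m))) ^ m := by
        rw [mul_rpow hu (exp_pos _).le, ← exp_mul, neg_mul, div_mul_cancel₀ _ hm.ne']
    _ ≤ (m / exp 1) ^ m := rpow_le_rpow (by positivity) key hm.le

open Complex in
theorem norm_integral_cexp_mul_le {φ φ' : ℝ → ℝ} {a b α : ℝ} (hab : a ≤ b) (hα : α ≠ 0)
    (hφ : ∀ t ∈ Icc a b, HasDerivAt φ (φ' t) t) (hφ' : IntervalIntegrable φ' volume a b) :
    ‖∫ t in a..b, exp (I * ↑(α * t)) * ↑(φ t)‖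
      ≤ (|φ a| + |φ b| + ∫ t in a..b, |φ' t|) / |α| := by
  set e : ℝ → ℂ := fun t => exp (I * ↑(α * t)) / (I * α)
  have hIα : I * α ≠ 0 := mul_ne_zero I_ne_zero (ofReal_ne_zero.mpr hα)
  have he : ∀ t, HasDerivAt e (exp (I * ↑(α * t))) t := by
    intro t
    have h := ((((hasDerivAt_id' t).const_mul α).ofReal_comp).const_mul I).cexp.div_const (I * α)
    exact h.congr_deriv (by rw [mul_one, mul_div_cancel_right₀ _ hIα])
  have he_norm : ∀ t, ‖e t‖ = 1 / |α| := by
    intro t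
    simp only [e, norm_div, norm_exp_I_mul_ofReal, norm_mul, norm_I, norm_real, Real.norm_eq_abs,
      one_mul]
  have hparts := intervalIntegral.integral_mul_deriv_eq_deriv_mul
    (fun t ht => (hφ t (by rwa [uIcc_of_le hab] at ht)).ofReal_comp) (fun t _ => he t)
    ⟨hφ'.1.ofReal, hφ'.2.ofReal⟩ ((continuous_exp.comp (by fun_prop)).intervalIntegrable a b)
  simp only [mul_comm (exp _)]
  rw [hparts]
  have hremainder : ‖∫ t in a..b, (φ' t : ℂ) * e t‖ ≤ (∫ t in a..b, |φ' t|) / |α| := by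
    rw [div_eq_mul_one_div, ← intervalIntegral.integral_mul_const]
    refine intervalIntegral.norm_integral_le_of_norm_le hab (.of_forall fun t _ => ?_)
      (hφ'.abs.mul_const _)
    rw [norm_mul, he_norm, norm_real, Real.norm_eq_abs]
  calc _ ≤ ‖(φ b : ℂ) * e b‖ + ‖(φ a : ℂ) * e a‖ + ‖∫ t in a..b, (φ' t : ℂ) * e t‖ :=
        (norm_sub_le _ _).trans (add_le_add_left (norm_sub_le _ _) _)
    _ ≤ _ := by
      simp only [norm_mul, he_norm, norm_real, Real.norm_eq_abs, mul_one_div]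
      rw [add_div, add_div]
      linarith

noncomputable def heatWeight (m r t : ℝ) : ℝ := Real.exp (-(r ^ 2 / t)) / t ^ m

section
open Real
variable {m r t : ℝ}

theorem heatWeight_nonneg (ht : 0 < t) : 0 ≤ heatWeight m r t := by
  unfold heatWeight; have := rpow_pos_of_pos ht m; positivity

theorem heatWeight_le_rpow_neg (ht : 0 < t) : heatWeight m r t ≤ t ^ (-m) := by
  rw [heatWeight, rpow_neg ht.le, div_eq_mul_inv]
  refine mul_le_of_le_one_left (by have := rpow_pos_of_pos ht m; positivity) ?_
  exact exp_le_one_iff.mpr (neg_nonpos.mpr (by positivity))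

theorem heatWeight_le (hm : 0 < m) (hr : r ≠ 0) (ht : 0 < t) :
    heatWeight m r t ≤ (m / exp 1) ^ m / (r ^ 2) ^ m := by
  have hr2 : 0 < r ^ 2 := by positivity
  calc heatWeight m r t = (r ^ 2 / t) ^ m * exp (-(r ^ 2 / t)) / (r ^ 2) ^ m := by
        rw [heatWeight, div_rpow hr2.le ht.le]
        field_simp [(rpow_pos_of_pos hr2 m).ne']
    _ ≤ (m / exp 1) ^ m / (r ^ 2) ^ m := by
        gcongr
        exact rpow_mul_exp_neg_le hm (div_pos hr2 ht).le

theorem hasDerivAt_heatWeight (ht : 0 < t) :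
    HasDerivAt (heatWeight m r) (heatWeight m r t * (r ^ 2 / t ^ 2 - m / t)) t := by
  have hexp :
      HasDerivAt (fun t => exp (-(r ^ 2 / t))) (exp (-(r ^ 2 / t)) * (r ^ 2 / t ^ 2)) t := by
    refine HasDerivAt.exp ?_
    simp only [div_eq_mul_inv]
    exact ((hasDerivAt_inv ht.ne').const_mul (r ^ 2)).neg.congr_deriv (by ring)
  have hpow : HasDerivAt (fun t => t ^ m) (m * t ^ (m - 1)) t :=
    hasDerivAt_rpow_const (Or.inl ht.ne')
  refine (hexp.div hpow (rpow_pos_of_pos ht m).ne').congr_deriv ?_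
  rw [heatWeight, rpow_sub_one ht.ne']
  field_simp

theorem abs_heatWeight_mul_le (hm : 0 ≤ m) (ht : 0 < t) :
    |heatWeight m r t * (r ^ 2 / t ^ 2 - m / t)| ≤ (1 + m) * t ^ (-m - 1) := by
  set u := r ^ 2 / t
  have hue : u * exp (-u) ≤ 1 := by
    rw [exp_neg, ← div_eq_mul_inv, div_le_one (exp_pos u)]
    linarith [add_one_le_exp u]
  have hsplit : heatWeight m r t * (r ^ 2 / t ^ 2 - m / t)
      = (u * exp (-u)) * (t ^ (-m) / t) - m * (exp (-u) * (t ^ (-m) / t)) := by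
    rw [heatWeight, rpow_neg ht.le]; simp only [u]; field_simp
  have he1 : exp (-u) ≤ 1 := exp_le_one_iff.mpr (neg_nonpos.mpr (by positivity))
  have hq : 0 ≤ t ^ (-m) / t := by positivity
  rw [hsplit, rpow_sub_one ht.ne', abs_sub_le_iff]
  have h1 : u * exp (-u) * (t ^ (-m) / t) ≤ t ^ (-m) / t := mul_le_of_le_one_left hq hue
  have h2 : m * (exp (-u) * (t ^ (-m) / t)) ≤ m * (t ^ (-m) / t) :=
    mul_le_mul_of_nonneg_left (mul_le_of_le_one_left hq he1) hm
  have h3 : 0 ≤ u * exp (-u) * (t ^ (-m) / t) := by positivity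
  have h4 : 0 ≤ m * (exp (-u) * (t ^ (-m) / t)) := by positivity
  constructor <;> linarith

theorem integral_rpow_neg_sub_one_le {a b : ℝ} (hm : 0 < m) (ha : 0 < a) (hab : a ≤ b) :
    ∫ t in a..b, t ^ (-m - 1) ≤ a ^ (-m) / m := by
  rw [integral_rpow (Or.inr ⟨by linarith, notMem_uIcc_of_lt ha (ha.trans_le hab)⟩),
    sub_add_cancel, div_neg, ← neg_div, neg_sub]
  gcongr
  exact sub_le_self _ (rpow_pos_of_pos (ha.trans_le hab) _).le

end

section
open Complex

theorem norm_cexp_mul_heatWeight {m r α t : ℝ} (ht : 0 < t) :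
    ‖exp (I * ↑(α * t)) * ↑(heatWeight m r t)‖ = heatWeight m r t := by
  rw [norm_mul, norm_exp_I_mul_ofReal, one_mul, norm_real,
    Real.norm_of_nonneg (heatWeight_nonneg ht)]

theorem intervalIntegrable_cexp_mul_heatWeight {m r α T : ℝ} (hm : 0 < m) (hr : r ≠ 0)
    (hT : 0 ≤ T) :
    IntervalIntegrable (fun t => exp (I * ↑(α * t)) * ↑(heatWeight m r t)) volume 0 T := by
  rw [intervalIntegrable_iff_integrableOn_Ioc_of_le hT]
  refine .of_bound measure_Ioc_lt_top (Measurable.aestronglyMeasurable ?_)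
    ((m / Real.exp 1) ^ m / (r ^ 2) ^ m) ?_
  · unfold heatWeight; fun_prop
  · rw [ae_restrict_iff' measurableSet_Ioc]
    refine .of_forall fun t ht => ?_
    rw [norm_cexp_mul_heatWeight ht.1]
    exact heatWeight_le hm hr ht.1

theorem norm_integral_cexp_mul_heatWeight_le_mul {m r α l : ℝ} (hm : 0 < m) (hr : r ≠ 0)
    (hl : 0 ≤ l) :
    ‖∫ t in (0)..l, exp (I * ↑(α * t)) * ↑(heatWeight m r t)‖
      ≤ (m / Real.exp 1) ^ m / (r ^ 2) ^ m * l := by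
  refine (intervalIntegral.norm_integral_le_of_norm_le_const fun t ht => ?_).trans_eq
    (by rw [sub_zero, abs_of_nonneg hl])
  rw [uIoc_of_le hl] at ht
  rw [norm_cexp_mul_heatWeight ht.1]
  exact heatWeight_le hm hr ht.1

theorem norm_integral_cexp_mul_heatWeight_le_rpow_neg {m r α l T : ℝ} (hm : 0 < m) (hα : α ≠ 0)
    (hl : 0 < l) (hlT : l ≤ T) :
    ‖∫ t in l..T, exp (I * ↑(α * t)) * ↑(heatWeight m r t)‖
      ≤ (2 + (1 + m) / m) * l ^ (-m) / |α| := by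
  have hpos : ∀ t ∈ Icc l T, 0 < t := fun t ht => hl.trans_le ht.1
  have hderiv : ∀ t ∈ Icc l T, HasDerivAt (heatWeight m r)
      (heatWeight m r t * (r ^ 2 / t ^ 2 - m / t)) t :=
    fun t ht => hasDerivAt_heatWeight (hpos t ht)
  have hcont : ContinuousOn (fun t => heatWeight m r t * (r ^ 2 / t ^ 2 - m / t)) (Icc l T) := by
    refine .mul (fun t ht => (hderiv t ht).continuousAt.continuousWithinAt) (.sub ?_ ?_)
    · exact continuousOn_const.div (continuousOn_pow 2)
        fun t ht => pow_ne_zero 2 (hpos t ht).ne'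
    · exact continuousOn_const.div continuousOn_id fun t ht => (hpos t ht).ne'
  refine (norm_integral_cexp_mul_le hlT hα hderiv (hcont.intervalIntegrable_of_Icc hlT)).trans ?_
  gcongr
  have hTl : heatWeight m r T ≤ l ^ (-m) :=
    (heatWeight_le_rpow_neg (hl.trans_le hlT)).trans
      (Real.rpow_le_rpow_of_nonpos hl hlT (by linarith))
  have hvar :
      ∫ t in l..T, |heatWeight m r t * (r ^ 2 / t ^ 2 - m / t)| ≤ (1 + m) / m * l ^ (-m) :=
    calc ∫ t in l..T, |heatWeight m r t * (r ^ 2 / t ^ 2 - m / t)|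
        ≤ ∫ t in l..T, (1 + m) * t ^ (-m - 1) :=
          intervalIntegral.integral_mono_on hlT (hcont.abs.intervalIntegrable_of_Icc hlT)
            ((intervalIntegral.intervalIntegrable_rpow
              (Or.inr (notMem_uIcc_of_lt hl (hl.trans_le hlT)))).const_mul _)
            fun t ht => abs_heatWeight_mul_le hm.le (hpos t ht)
      _ = (1 + m) * ∫ t in l..T, t ^ (-m - 1) := intervalIntegral.integral_const_mul _ _
      _ ≤ (1 + m) * (l ^ (-m) / m) := by gcongr; exact integral_rpow_neg_sub_one_le hm hl hlT
      _ = (1 + m) / m * l ^ (-m) := by ring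
  rw [abs_of_nonneg (heatWeight_nonneg hl), abs_of_nonneg (heatWeight_nonneg (hl.trans_le hlT))]
  linarith [heatWeight_le_rpow_neg (m := m) (r := r) hl]

theorem norm_setIntegral_cexp_mul_heatWeight_le {m r α l T : ℝ} (hm : 0 < m) (hα : α ≠ 0)
    (hr : r ≠ 0) (hl : 0 < l) (hlT : l ≤ T) :
    ‖∫ t in Ioc 0 T, exp (I * ↑(α * t)) * ↑(heatWeight m r t)‖
      ≤ (m / Real.exp 1) ^ m / (r ^ 2) ^ m * l + (2 + (1 + m) / m) * l ^ (-m) / |α| := by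
  have h0l := intervalIntegrable_cexp_mul_heatWeight (α := α) hm hr hl.le
  have h0T := intervalIntegrable_cexp_mul_heatWeight (α := α) hm hr (hl.le.trans hlT)
  rw [← intervalIntegral.integral_of_le (hl.le.trans hlT),
    ← intervalIntegral.integral_add_adjacent_intervals h0l (h0l.symm.trans h0T)]
  exact (norm_add_le _ _).trans <|
    add_le_add (norm_integral_cexp_mul_heatWeight_le_mul hm hr hl.le)
      (norm_integral_cexp_mul_heatWeight_le_rpow_neg hm hα hl hlT)

end

section
open Real
variable {m r β : ℝ}

theorem rpow_mul_rpow_neg_div_sq_rpow (hm : m + 1 ≠ 0) (hr : 0 < r) (hβ : 0 < β) :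
    r ^ (2 * m / (m + 1)) * β ^ (-(1 / (m + 1))) / (r ^ 2) ^ m
      = (β ^ (1 / (m + 1)) * r ^ (2 * m ^ 2 / (m + 1)))⁻¹ := by
  rw [← rpow_natCast, Nat.cast_ofNat, ← rpow_mul hr.le, mul_div_right_comm, ← rpow_sub hr,
    mul_inv, ← rpow_neg hβ.le, ← rpow_neg hr.le, mul_comm (β ^ _)]
  congr 2
  field_simp
  ring

theorem rpow_mul_rpow_neg_rpow_neg_div (hm : m + 1 ≠ 0) (hr : 0 < r) (hβ : 0 < β) :
    (r ^ (2 * m / (m + 1)) * β ^ (-(1 / (m + 1)))) ^ (-m) / β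
      = (β ^ (1 / (m + 1)) * r ^ (2 * m ^ 2 / (m + 1)))⁻¹ := by
  rw [mul_rpow (by positivity) (by positivity), ← rpow_mul hr.le, ← rpow_mul hβ.le,
    mul_div_assoc, ← rpow_sub_one hβ.ne', mul_inv, ← rpow_neg hβ.le, ← rpow_neg hr.le,
    mul_comm (β ^ _)]
  congr 2
  · field_simp
  · field_simp
    ring

end

theorem stmt_3 (m : ℝ) (hm : 0 < m) :
    ∃ C > 0, ∀ (α r : ℝ), α ≠ 0 → 0 < r → ∀ I : ℂ,
      Tendsto (fun T : ℝ =>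
          ∫ t in Ioc (0 : ℝ) T,
            Complex.exp (Complex.I * ((α * t : ℝ) : ℂ)) *
              ((Real.exp (-(r ^ 2 / t)) / t ^ m : ℝ) : ℂ))
        atTop (nhds I) →
      ‖I‖ ≤ C / (|α| ^ (1 / (m + 1)) * r ^ (2 * m ^ 2 / (m + 1))) := by
  refine ⟨(m / Real.exp 1) ^ m + (2 + (1 + m) / m), by positivity, fun α r hα hr I hI => ?_⟩
  have hm1 : m + 1 ≠ 0 := by linarith
  have hβ : 0 < |α| := abs_pos.mpr hα
  set l := r ^ (2 * m / (m + 1)) * |α| ^ (-(1 / (m + 1)))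
  refine le_of_tendsto hI.norm (eventually_atTop.2 ⟨l, fun T hT => ?_⟩)
  refine (norm_setIntegral_cexp_mul_heatWeight_le hm hα hr.ne' (by positivity) hT).trans_eq ?_
  rw [mul_div_assoc, div_mul_comm, rpow_mul_rpow_neg_div_sq_rpow hm1 hr hβ,
    rpow_mul_rpow_neg_rpow_neg_div hm1 hr hβ]
  ring
end

section
/- Let G(x,t) = (4πt)^{-1} e^{-|x|²/(4t)} be the two-dimensional Gauss kernel and let O(θ) be the rotation matrix by angle θ. For every m > 1 there is a constant C = C(m), independent of x, y ∈ ℝ² and α ∈ ℝ, such that for all x, y with |x| > 2|y|: ∫₀^∞ | e^{-|O(αt)x - y|²/(4t)} − e^{-|x|²/(4t)} | t^{-m} dt ≤ C |y| / |x|^{2m-1}. -/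
/-!
Since `|O(αt)x| = |x| > 2|y|`, the two exponents `|O(αt)x − y|²/4` and `|x|²/4` are both at least
`|x|²/16` and differ by at most `(5/8)|x||y|`. The mean value inequality for `exp` on
`[|x|²/(16t), ∞)` then bounds the integrand by `(5/8)|x||y| e^{−|x|²/(16t)} t^{−m−1}`, whose integral
is `(5/8)|x||y| (16/|x|²)^m Γ(m)` after the substitution `t ↦ 1/t`.
-/

open MeasureTheory Set

theorem abs_exp_neg_sub_exp_neg_le {u v L : ℝ} (hu : L ≤ u) (hv : L ≤ v) :
    |Real.exp (-u) - Real.exp (-v)| ≤ |u - v| * Real.exp (-L) := by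
  wlog huv : u ≤ v generalizing u v
  · rw [abs_sub_comm, abs_sub_comm u v]
    exact this hv hu (le_of_not_ge huv)
  have hexp : Real.exp (-v) = Real.exp (-u) * Real.exp (-(v - u)) := by
    rw [← Real.exp_add]; ring_nf
  have hle_one : Real.exp (-(v - u)) ≤ 1 := Real.exp_le_one_iff.mpr (by linarith)
  have hone_sub : 1 - Real.exp (-(v - u)) ≤ v - u := by
    linarith [Real.add_one_le_exp (-(v - u))]
  calc |Real.exp (-u) - Real.exp (-v)| = Real.exp (-u) * (1 - Real.exp (-(v - u))) := by
        rw [hexp, ← mul_one_sub, abs_of_nonneg (by have := sub_nonneg.2 hle_one; positivity)]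
    _ ≤ Real.exp (-L) * (v - u) :=
        mul_le_mul (Real.exp_le_exp.2 (by linarith)) hone_sub (sub_nonneg.2 hle_one) (by positivity)
    _ = |u - v| * Real.exp (-L) := by
        rw [abs_sub_comm, abs_of_nonneg (sub_nonneg.2 huv), mul_comm]

theorem abs_norm_sub_sq_sub_norm_sq_le {E : Type*} [SeminormedAddCommGroup E] (z y : E) :
    |‖z - y‖ ^ 2 - ‖z‖ ^ 2| ≤ ‖y‖ * (2 * ‖z‖ + ‖y‖) := by
  have hdiff : |‖z - y‖ - ‖z‖| ≤ ‖y‖ := by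
    simpa using abs_norm_sub_norm_le (z - y) z
  have hsum : ‖z - y‖ + ‖z‖ ≤ 2 * ‖z‖ + ‖y‖ := by linarith [norm_sub_le z y]
  rw [sq_sub_sq, abs_mul, abs_of_nonneg (by positivity), mul_comm]
  exact mul_le_mul hdiff hsum (by positivity) (norm_nonneg y)

section GammaIntegral

variable {s c : ℝ}

-- The integrand produced by `integral_comp_rpow_Ioi` for the substitution `t = x⁻¹`.
theorem rpow_neg_one_smul_rpow_mul_exp {x : ℝ} (hx : 0 < x) :
    (|(-1 : ℝ)| * x ^ ((-1 : ℝ) - 1)) • ((x ^ (-1 : ℝ)) ^ (s - 1) * Real.exp (-(c * x ^ (-1 : ℝ))))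
      = Real.exp (-c / x) / x ^ (s + 1) := by
  have hpow : x ^ ((-1 : ℝ) - 1) * (x ^ (-1 : ℝ)) ^ (s - 1) = (x ^ (s + 1))⁻¹ := by
    rw [← Real.rpow_mul hx.le, ← Real.rpow_add hx, ← Real.rpow_neg hx.le]
    ring_nf
  rw [smul_eq_mul, abs_neg, abs_one, one_mul, ← mul_assoc, hpow, Real.rpow_neg_one, div_eq_mul_inv,
    ← div_eq_mul_inv, neg_div]
  ring

theorem integrableOn_exp_neg_div_div_rpow (hs : 0 < s) (hc : 0 < c) :
    IntegrableOn (fun t : ℝ => Real.exp (-c / t) / t ^ (s + 1)) (Ioi 0) := by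
  have hint : IntegrableOn (fun x : ℝ => x ^ (s - 1) * Real.exp (-(c * x))) (Ioi 0) := by
    simpa only [Real.rpow_one, neg_mul] using
      integrableOn_rpow_mul_exp_neg_mul_rpow (p := 1) (s := s - 1) (by linarith) one_pos hc
  rw [← integrableOn_Ioi_comp_rpow_iff _ (by norm_num : (-1 : ℝ) ≠ 0)] at hint
  exact (integrableOn_congr_fun (fun x hx => rpow_neg_one_smul_rpow_mul_exp hx)
    measurableSet_Ioi).mp hint

theorem integral_exp_neg_div_div_rpow (hs : 0 < s) (hc : 0 < c) :
    ∫ t in Ioi (0 : ℝ), Real.exp (-c / t) / t ^ (s + 1) = (1 / c) ^ s * Real.Gamma s := by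
  rw [← Real.integral_rpow_mul_exp_neg_mul_Ioi hs hc,
    ← integral_comp_rpow_Ioi (fun y => y ^ (s - 1) * Real.exp (-(c * y))) (p := -1) (by norm_num)]
  exact setIntegral_congr_fun measurableSet_Ioi fun x hx =>
    (rpow_neg_one_smul_rpow_mul_exp hx).symm

end GammaIntegral

theorem abs_exp_neg_div_sub_div_rpow_le {m L D a b t : ℝ} (ht : 0 < t) (ha : L ≤ a) (hb : L ≤ b)
    (hab : |a - b| ≤ D) :
    |Real.exp (-a / t) - Real.exp (-b / t)| / t ^ m ≤ D * (Real.exp (-L / t) / t ^ (m + 1)) := by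
  have hexp : |Real.exp (-a / t) - Real.exp (-b / t)| ≤ D / t * Real.exp (-L / t) := by
    simp only [neg_div]
    calc _ ≤ |a / t - b / t| * Real.exp (-(L / t)) :=
          abs_exp_neg_sub_exp_neg_le (div_le_div_of_nonneg_right ha ht.le)
            (div_le_div_of_nonneg_right hb ht.le)
      _ ≤ D / t * Real.exp (-(L / t)) := by
          rw [← sub_div, abs_div, abs_of_pos ht]
          gcongr
  rw [Real.rpow_add_one ht.ne', div_le_iff₀ (by positivity)]
  refine hexp.trans_eq ?_
  have : t ^ m ≠ 0 := (Real.rpow_pos_of_pos ht m).ne'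
  field_simp

theorem integral_abs_exp_neg_div_sub_div_rpow_le {m L D : ℝ} {a b : ℝ → ℝ} (hm : 0 < m)
    (hL : 0 < L) (ha : ∀ t, L ≤ a t) (hb : ∀ t, L ≤ b t) (hab : ∀ t, |a t - b t| ≤ D) :
    ∫ t in Ioi (0 : ℝ), |Real.exp (-a t / t) - Real.exp (-b t / t)| / t ^ m
      ≤ D * ((1 / L) ^ m * Real.Gamma m) := by
  rw [← integral_exp_neg_div_div_rpow hm hL, ← integral_const_mul]
  refine integral_mono_of_nonneg (ae_restrict_of_forall_mem measurableSet_Ioi fun t ht => ?_)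
    ((integrableOn_exp_neg_div_div_rpow hm hL).const_mul D)
    (ae_restrict_of_forall_mem measurableSet_Ioi fun t ht =>
      abs_exp_neg_div_sub_div_rpow_le ht (ha t) (hb t) (hab t))
  have : 0 < t ^ m := Real.rpow_pos_of_pos ht m
  positivity

/-- Points of the plane are identified with complex numbers; the rotation
`O(αt)` acts as multiplication by `exp(i α t)`, which preserves the norm. -/
theorem stmt_8 (m : ℝ) (hm : 1 < m) :
    ∃ C > 0, ∀ (α : ℝ) (x y : ℂ), 2 * ‖y‖ < ‖x‖ →
      (∫ t in Ioi (0 : ℝ),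
          |Real.exp (-(‖Complex.exp (Complex.I * ((α * t : ℝ) : ℂ)) * x - y‖) ^ 2
                / (4 * t))
            - Real.exp (-(‖x‖) ^ 2 / (4 * t))| / t ^ m)
        ≤ C * ‖y‖ / ‖x‖ ^ (2 * m - 1) := by
  have hm0 : 0 < m := by linarith
  refine ⟨5 / 8 * 16 ^ m * Real.Gamma m, by have := Real.Gamma_pos_of_pos hm0; positivity, ?_⟩
  intro α x y hxy
  have hx : 0 < ‖x‖ := by linarith [norm_nonneg y]
  set z : ℝ → ℂ := fun t => Complex.exp (Complex.I * ((α * t : ℝ) : ℂ)) * x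
  have hz : ∀ t, ‖z t‖ = ‖x‖ := fun t => by
    rw [norm_mul, Complex.norm_exp_I_mul_ofReal, one_mul]
  have hfar : ∀ t, ‖x‖ ^ 2 / 16 ≤ ‖z t - y‖ ^ 2 / 4 := fun t => by
    nlinarith [hz t ▸ norm_sub_norm_le (z t) y]
  have hclose : ∀ t, |‖z t - y‖ ^ 2 / 4 - ‖x‖ ^ 2 / 4| ≤ 5 / 8 * ‖x‖ * ‖y‖ := fun t => by
    have := hz t ▸ abs_norm_sub_sq_sub_norm_sq_le (z t) y
    rw [← sub_div, abs_div, abs_of_pos (four_pos : (0 : ℝ) < 4), div_le_iff₀ four_pos]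
    nlinarith [norm_nonneg y]
  have hbound := integral_abs_exp_neg_div_sub_div_rpow_le hm0 (by positivity) hfar
    (fun _ => by linarith [sq_nonneg ‖x‖]) hclose
  have hscale : 5 / 8 * ‖x‖ * ‖y‖ * ((1 / (‖x‖ ^ 2 / 16)) ^ m * Real.Gamma m)
      = 5 / 8 * 16 ^ m * Real.Gamma m * ‖y‖ / ‖x‖ ^ (2 * m - 1) := by
    have hpow : (1 / (‖x‖ ^ 2 / 16)) ^ m = 16 ^ m / (‖x‖ ^ (2 * m - 1) * ‖x‖) := by
      rw [one_div_div, Real.div_rpow (by norm_num) (by positivity), ← Real.rpow_add_one hx.ne',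
        ← Real.rpow_natCast, ← Real.rpow_mul hx.le]
      ring_nf
    have : ‖x‖ ^ (2 * m - 1) ≠ 0 := (Real.rpow_pos_of_pos hx _).ne'
    rw [hpow]
    field_simp
  simpa only [neg_div, div_div, hscale] using hbound
end

section
/- Let m > 1 and α ∈ ℝ \ {0}. There exists C = C(m), independent of x and α, such that for all x ∈ ℝ² with |x| > 0: |∫₀^∞ e^{iαt} e^{-|x|²/(4t)} t^{-m} dt| ≤ C min{ 1/(|α| |x|^{2m}), 1/|x|^{2(m-1)} }. -/
/-!
The substitution `u = 1 / t` turns `∫₀^∞ e^{-a/t} t^{-s} dt` into a Gamma integral, equal to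
`Γ(s - 1) / a^{s - 1}`; bounding `|e^{iαt}|` by `1` and taking `a = |x|² / 4` gives the second
bound. For the first, one integration by parts against `e^{iαt} = (iα)⁻¹ d/dt e^{iαt}` gains the
factor `1 / |α|`, and the derivative of the kernel `e^{-a/t} t^{-s}` is bounded by
`a e^{-a/t} t^{-(s+2)} + s e^{-a/t} t^{-(s+1)}`, whose integral is again a sum of Gamma integrals,
`2 Γ(s + 1) / a^s`.
-/

open MeasureTheory Set Real Filter Topology

section Oscillatory

variable {α : ℝ}

lemma norm_cexp_I_mul_ofReal (x : ℝ) : ‖Complex.exp (Complex.I * (x : ℂ))‖ = 1 := by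
  rw [mul_comm, Complex.norm_exp_ofReal_mul_I]

theorem norm_integral_cexp_mul_le_integral_norm {f : ℝ → ℂ} {S : Set ℝ} :
    ‖∫ t in S, Complex.exp (Complex.I * ((α * t : ℝ) : ℂ)) * f t‖ ≤ ∫ t in S, ‖f t‖ :=
  (norm_integral_le_integral_norm _).trans_eq <| by
    simp only [norm_mul, norm_cexp_I_mul_ofReal, one_mul]

theorem norm_integral_Ioi_cexp_mul_le {f f' : ℝ → ℂ} {b : ℝ} (hα : α ≠ 0)
    (hf : ∀ t ∈ Ioi b, HasDerivAt f (f' t) t) (hfi : IntegrableOn f (Ioi b))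
    (hf'i : IntegrableOn f' (Ioi b)) (hb : Tendsto f (𝓝[>] b) (𝓝 0))
    (htop : Tendsto f atTop (𝓝 0)) :
    ‖∫ t in Ioi b, Complex.exp (Complex.I * ((α * t : ℝ) : ℂ)) * f t‖ ≤
      (∫ t in Ioi b, ‖f' t‖) / |α| := by
  set c : ℂ := Complex.I * α
  have hc : c ≠ 0 := mul_ne_zero Complex.I_ne_zero (Complex.ofReal_ne_zero.2 hα)
  set e : ℝ → ℂ := fun t => Complex.exp (Complex.I * ((α * t : ℝ) : ℂ))
  have he : ∀ t, HasDerivAt (fun t => e t / c) (e t) t := fun t => by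
    have := (((hasDerivAt_id (t : ℂ)).const_mul c).cexp.comp_ofReal).div_const c
    simpa [e, c, hc, mul_comm, mul_left_comm] using this
  have hnorm : ∀ t, ‖e t / c‖ = |α|⁻¹ := fun t => by
    rw [norm_div, show ‖e t‖ = 1 from norm_cexp_I_mul_ofReal _]
    simp [c]
  have he_cont : Continuous fun t => e t / c :=
    continuous_iff_continuousAt.2 fun t => (he t).continuousAt
  have hlim : ∀ l, Tendsto f l (𝓝 0) → Tendsto (f * fun t => e t / c) l (𝓝 0) := fun l hl => by
    refine tendsto_zero_iff_norm_tendsto_zero.2 ?_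
    simpa only [Pi.mul_apply, norm_mul, hnorm, norm_zero, zero_mul] using hl.norm.mul_const |α|⁻¹
  have hibp := integral_Ioi_mul_deriv_eq_deriv_mul hf (fun t _ => he t)
    (hfi.mul_bdd (by fun_prop) (ae_of_all _ fun t => (norm_cexp_I_mul_ofReal _).le))
    (hf'i.mul_bdd he_cont.aestronglyMeasurable (ae_of_all _ fun t => (hnorm t).le))
    (hlim _ hb) (hlim _ htop)
  calc ‖∫ t in Ioi b, e t * f t‖ = ‖∫ t in Ioi b, f t * e t‖ := by
        simp only [mul_comm (e _)]
    _ = ‖∫ t in Ioi b, f' t * (e t / c)‖ := by rw [hibp, sub_zero, zero_sub, norm_neg]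
    _ ≤ ∫ t in Ioi b, ‖f' t‖ * |α|⁻¹ := by
        simpa only [norm_mul, hnorm] using
          norm_integral_le_integral_norm (fun t => f' t * (e t / c))
    _ = (∫ t in Ioi b, ‖f' t‖) / |α| := by rw [integral_mul_const, div_eq_mul_inv]

end Oscillatory

section Kernel

variable {a s : ℝ}

/- The shape of the left-hand side of `integral_comp_rpow_Ioi` for `p = -1`, i.e. for the
substitution `u = 1 / t` turning the integral into a Gamma integral. -/
lemma exp_neg_div_div_rpow_eq_comp_inv {t : ℝ} (ht : 0 < t) :
    exp (-(a / t)) / t ^ s = (|(-1 : ℝ)| * t ^ ((-1 : ℝ) - 1)) •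
      ((t ^ (-1 : ℝ)) ^ (s - 1 - 1) * exp (-(a * t ^ (-1 : ℝ)))) := by
  rw [rpow_neg_one, inv_rpow ht.le, ← rpow_neg ht.le, smul_eq_mul, abs_neg, abs_one, one_mul,
    ← mul_assoc, ← rpow_add ht, ← div_eq_mul_inv, mul_comm, div_eq_mul_inv, ← rpow_neg ht.le]
  ring_nf

theorem integral_exp_neg_div_div_rpow_Ioi (ha : 0 < a) (hs : 1 < s) :
    ∫ t in Ioi 0, exp (-(a / t)) / t ^ s = Gamma (s - 1) / a ^ (s - 1) := by
  rw [setIntegral_congr_fun measurableSet_Ioi fun t ht => exp_neg_div_div_rpow_eq_comp_inv ht,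
    integral_comp_rpow_Ioi (fun u => u ^ (s - 1 - 1) * exp (-(a * u))) (by norm_num),
    integral_rpow_mul_exp_neg_mul_Ioi (by linarith) ha, div_rpow zero_le_one ha.le, one_rpow]
  ring

theorem integrableOn_exp_neg_div_div_rpow_Ioi (ha : 0 < a) (hs : 1 < s) :
    IntegrableOn (fun t => exp (-(a / t)) / t ^ s) (Ioi 0) := by
  refine Integrable.of_integral_ne_zero ?_
  rw [integral_exp_neg_div_div_rpow_Ioi ha hs]
  positivity

theorem hasDerivAt_exp_neg_div_div_rpow {t : ℝ} (ht : 0 < t) :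
    HasDerivAt (fun t => exp (-(a / t)) / t ^ s)
      (a * (exp (-(a / t)) / t ^ (s + 2)) - s * (exp (-(a / t)) / t ^ (s + 1))) t := by
  have hexp : HasDerivAt (fun t => exp (-(a / t))) (exp (-(a / t)) * (a / t ^ 2)) t := by
    simpa [div_eq_mul_inv] using ((hasDerivAt_inv ht.ne').const_mul a).neg.exp
  refine (hexp.div (hasDerivAt_rpow_const (p := s) (Or.inl ht.ne'))
    (rpow_pos_of_pos ht s).ne').congr_deriv ?_
  rw [rpow_add ht, rpow_add ht, rpow_sub_one ht.ne', rpow_two, rpow_one]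
  have := (rpow_pos_of_pos ht s).ne'
  field_simp

theorem tendsto_exp_neg_div_div_rpow_nhdsGT_zero (ha : 0 < a) :
    Tendsto (fun t => exp (-(a / t)) / t ^ s) (𝓝[>] 0) (𝓝 0) := by
  refine ((tendsto_rpow_mul_exp_neg_mul_atTop_nhds_zero s a ha).comp
    tendsto_inv_nhdsGT_zero).congr' ?_
  filter_upwards [self_mem_nhdsWithin] with t (ht : 0 < t)
  simp [inv_rpow ht.le, div_eq_mul_inv, mul_comm]

theorem tendsto_exp_neg_div_div_rpow_atTop (hs : 0 < s) :
    Tendsto (fun t => exp (-(a / t)) / t ^ s) atTop (𝓝 0) := by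
  have hexp : Tendsto (fun t => exp (-(a / t))) atTop (𝓝 1) := by
    simpa using ((tendsto_const_nhds (x := a)).div_atTop tendsto_id).neg.rexp
  exact hexp.div_atTop (tendsto_rpow_atTop hs)

theorem norm_integral_cexp_mul_exp_neg_div_div_rpow_le_Gamma (ha : 0 < a) (hs : 1 < s) (α : ℝ) :
    ‖∫ t in Ioi 0, Complex.exp (Complex.I * ((α * t : ℝ) : ℂ)) *
        ((exp (-(a / t)) / t ^ s : ℝ) : ℂ)‖ ≤ Gamma (s - 1) / a ^ (s - 1) := by
  refine norm_integral_cexp_mul_le_integral_norm.trans_eq ?_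
  rw [← integral_exp_neg_div_div_rpow_Ioi ha hs]
  refine setIntegral_congr_fun measurableSet_Ioi fun t (ht : 0 < t) => ?_
  rw [Complex.norm_real, norm_of_nonneg (by positivity)]

theorem integral_abs_deriv_exp_neg_div_div_rpow_le (ha : 0 < a) (hs : 1 < s) :
    ∫ t in Ioi 0, |a * (exp (-(a / t)) / t ^ (s + 2)) - s * (exp (-(a / t)) / t ^ (s + 1))| ≤
      2 * Gamma (s + 1) / a ^ s := by
  have i₁ := integrableOn_exp_neg_div_div_rpow_Ioi ha (s := s + 2) (by linarith)
  have i₂ := integrableOn_exp_neg_div_div_rpow_Ioi ha (s := s + 1) (by linarith)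
  calc _ ≤ ∫ t in Ioi 0,
          a * (exp (-(a / t)) / t ^ (s + 2)) + s * (exp (-(a / t)) / t ^ (s + 1)) := by
        refine setIntegral_mono_on ((i₁.const_mul a).sub (i₂.const_mul s)).abs
          ((i₁.const_mul a).add (i₂.const_mul s)) measurableSet_Ioi fun t (ht : 0 < t) => ?_
        refine (abs_sub _ _).trans_eq ?_
        rw [abs_of_nonneg (by positivity), abs_of_nonneg (by positivity)]
    _ = a * (Gamma (s + 1) / a ^ (s + 1)) + s * (Gamma s / a ^ s) := by
        rw [integral_add (i₁.const_mul a) (i₂.const_mul s), integral_const_mul, integral_const_mul,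
          integral_exp_neg_div_div_rpow_Ioi ha (by linarith),
          integral_exp_neg_div_div_rpow_Ioi ha (by linarith), add_sub_assoc, add_sub_cancel_right]
        norm_num
    _ = 2 * Gamma (s + 1) / a ^ s := by
        rw [rpow_add_one ha.ne', Gamma_add_one (by linarith)]
        field_simp
        ring

theorem norm_integral_cexp_mul_exp_neg_div_div_rpow_le_div {α : ℝ} (ha : 0 < a) (hs : 1 < s)
    (hα : α ≠ 0) :
    ‖∫ t in Ioi 0, Complex.exp (Complex.I * ((α * t : ℝ) : ℂ)) *
        ((exp (-(a / t)) / t ^ s : ℝ) : ℂ)‖ ≤ 2 * Gamma (s + 1) / a ^ s / |α| := by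
  have i₁ := integrableOn_exp_neg_div_div_rpow_Ioi ha (s := s + 2) (by linarith)
  have i₂ := integrableOn_exp_neg_div_div_rpow_Ioi ha (s := s + 1) (by linarith)
  refine (norm_integral_Ioi_cexp_mul_le hα
    (fun t ht => (hasDerivAt_exp_neg_div_div_rpow ht).ofReal_comp)
    (integrableOn_exp_neg_div_div_rpow_Ioi ha hs).ofReal
    ((i₁.const_mul a).sub (i₂.const_mul s)).ofReal
    (by simpa using (tendsto_exp_neg_div_div_rpow_nhdsGT_zero ha).ofReal)
    (by simpa using (tendsto_exp_neg_div_div_rpow_atTop (by linarith)).ofReal)).trans ?_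
  gcongr
  simpa only [Complex.norm_real, norm_eq_abs] using integral_abs_deriv_exp_neg_div_div_rpow_le ha hs

end Kernel

lemma sq_div_rpow {r c : ℝ} (hr : 0 ≤ r) (hc : 0 ≤ c) (p : ℝ) :
    (r ^ 2 / c) ^ p = r ^ (2 * p) / c ^ p := by
  rw [div_rpow (sq_nonneg r) hc, ← rpow_natCast, ← rpow_mul hr, Nat.cast_ofNat]

theorem stmt_9 (m : ℝ) (hm : 1 < m) :
    ∃ C > 0, ∀ (α : ℝ), α ≠ 0 → ∀ x : EuclideanSpace ℝ (Fin 2), x ≠ 0 →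
      ‖∫ t in Ioi (0 : ℝ),
          Complex.exp (Complex.I * ((α * t : ℝ) : ℂ)) *
            ((Real.exp (-(‖x‖ ^ 2 / (4 * t))) / t ^ m : ℝ) : ℂ)‖
        ≤ C * min (1 / (|α| * ‖x‖ ^ (2 * m))) (1 / ‖x‖ ^ (2 * (m - 1))) := by
  refine ⟨max (2 * Gamma (m + 1) * 4 ^ m) (Gamma (m - 1) * 4 ^ (m - 1)), by positivity,
    fun α hα x hx => ?_⟩
  have hx₀ : 0 < ‖x‖ := norm_pos_iff.2 hx
  have ha : 0 < ‖x‖ ^ 2 / 4 := by positivity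
  simp_rw [fun t : ℝ => (div_div (‖x‖ ^ 2) 4 t).symm]
  rw [mul_min_of_nonneg _ _ (by positivity)]
  refine le_min ?_ ?_
  · calc _ ≤ 2 * Gamma (m + 1) / (‖x‖ ^ 2 / 4) ^ m / |α| :=
          norm_integral_cexp_mul_exp_neg_div_div_rpow_le_div ha hm hα
      _ = 2 * Gamma (m + 1) * 4 ^ m * (1 / (|α| * ‖x‖ ^ (2 * m))) := by
          rw [sq_div_rpow hx₀.le zero_le_four]
          field_simp
      _ ≤ _ := by gcongr ?_ * _; exact le_max_left _ _
  · calc _ ≤ Gamma (m - 1) / (‖x‖ ^ 2 / 4) ^ (m - 1) :=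
          norm_integral_cexp_mul_exp_neg_div_div_rpow_le_Gamma ha hm α
      _ = Gamma (m - 1) * 4 ^ (m - 1) * (1 / ‖x‖ ^ (2 * (m - 1))) := by
          rw [sq_div_rpow hx₀.le zero_le_four]
          field_simp
      _ ≤ _ := by gcongr ?_ * _; exact le_max_right _ _
end
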